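/- Let w be defined by w_n = 2 for odd n and w_n = (2 w_{n/2})^{-1} for even n, and M_i^m = w_i ⋯ w_{i+m-1}. Then for every n ∈ ℕ, M_{n+1}^n = (M_1^n)^{-2}. Consequently, if (n_k) is an increasing sequence of positive integers with M_1^{n_k} → ∞, then M_{n_k+1}^{n_k} → 0 and hence inf_{i,k} M_i^{n_k} = 0. -/

import Mathlib

open Filter Topology

/-- The weight sequence: `w n = 2` for odd `n`, `w n = (2 * w (n/2))⁻¹` for even `n`. -/
noncomputable def petrovW : ℕ → ℝ
  | 0 => 2
  | (n + 1) => if (n + 1) % 2 = 1 then 2 else (2 * petrovW ((n + 1) / 2))⁻¹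
decreasing_by omega

/-- `Mw w i k = w i * w (i+1) * ⋯ * w (i+k-1)`. -/
noncomputable def Mw (w : ℕ → ℝ) (i k : ℕ) : ℝ := ∏ t ∈ Finset.range k, w (i + t)

/-!
Each odd weight pairs with the even weight after it: `w (2m+1) * w (2m+2) = (w (m+1))⁻¹`.
Hence a block of `2k` weights starting at `2i+1` has product `(M_{i+1}^k)⁻¹`; in particular
`M_1^{2n} = (M_1^n)⁻¹`. Splitting `M_1^{2n} = M_1^n · M_{n+1}^n` gives `M_{n+1}^n = (M_1^n)⁻²`,
which tends to `0` along any `n_k` with `M_1^{n_k} → ∞`; as all weights are positive, the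
infimum of the `M_i^{n_k}` is then `0`.
-/

lemma Mw_add (w : ℕ → ℝ) (i k l : ℕ) : Mw w i (k + l) = Mw w i k * Mw w (i + k) l := by
  simp only [Mw, Finset.prod_range_add, add_assoc]

lemma Mw_pos {w : ℕ → ℝ} (hw : ∀ n, 0 < w n) (i k : ℕ) : 0 < Mw w i k :=
  Finset.prod_pos fun _ _ => hw _

lemma Mw_two_mul_of_mul_eq_inv {w : ℕ → ℝ}
    (hw : ∀ m, w (2 * m + 1) * w (2 * m + 2) = (w (m + 1))⁻¹)
    (i k : ℕ) : Mw w (2 * i + 1) (2 * k) = (Mw w (i + 1) k)⁻¹ := by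
  induction k with
  | zero => simp [Mw]
  | succ k ih =>
    rw [mul_add, Mw_add, ih, Mw_add w (i + 1) k 1, mul_inv]
    congr 1
    simp only [Mw, Finset.prod_range_succ, Finset.prod_range_zero, one_mul, add_zero]
    have h := hw (i + k)
    rwa [show 2 * (i + k) + 1 = 2 * i + 1 + 2 * k by omega,
      show 2 * (i + k) + 2 = 2 * i + 1 + 2 * k + 1 by omega,
      show i + k + 1 = i + 1 + k by omega] at h

lemma Mw_succ_self_of_mul_eq_inv {w : ℕ → ℝ}
    (hw : ∀ m, w (2 * m + 1) * w (2 * m + 2) = (w (m + 1))⁻¹)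
    (n : ℕ) (hn : Mw w 1 n ≠ 0) : Mw w (n + 1) n = (Mw w 1 n)⁻¹ ^ 2 := by
  have hsplit : Mw w 1 n * Mw w (n + 1) n = (Mw w 1 n)⁻¹ := by
    rw [add_comm n 1, ← Mw_add, ← two_mul]
    simpa using Mw_two_mul_of_mul_eq_inv hw 0 n
  rw [← inv_mul_cancel_left₀ hn (Mw w (n + 1) n), hsplit, sq]

lemma iInf_eq_zero_of_tendsto_zero {ι κ : Type*} {f : ι → ℝ} (hf : ∀ i, 0 ≤ f i) {g : κ → ι}
    {l : Filter κ} [l.NeBot] (hg : Tendsto (f ∘ g) l (𝓝 0)) : ⨅ i, f i = 0 := by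
  have hbdd : BddBelow (Set.range f) := ⟨0, Set.forall_mem_range.2 hf⟩
  refine le_antisymm ?_ ?_
  · exact ge_of_tendsto hg (Eventually.of_forall fun k => ciInf_le hbdd (g k))
  · have : Nonempty ι := (l.nonempty_of_mem univ_mem).elim fun k _ => ⟨g k⟩
    exact le_ciInf hf

lemma petrovW_pos (n : ℕ) : 0 < petrovW n := by
  induction n using Nat.strong_induction_on with
  | _ n ih =>
    match n with
    | 0 => norm_num [petrovW]
    | m + 1 =>
      rw [petrovW]
      split
      · norm_num
      · have := ih ((m + 1) / 2) (by omega)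
        positivity

lemma petrovW_two_mul_add_one (m : ℕ) : petrovW (2 * m + 1) = 2 := by
  rw [petrovW, if_pos (by omega)]

lemma petrovW_two_mul_add_two (m : ℕ) : petrovW (2 * m + 2) = (2 * petrovW (m + 1))⁻¹ := by
  rw [petrovW, if_neg (by omega), show (2 * m + 1 + 1) / 2 = m + 1 by omega]

lemma petrovW_mul_eq_inv (m : ℕ) :
    petrovW (2 * m + 1) * petrovW (2 * m + 2) = (petrovW (m + 1))⁻¹ := by
  rw [petrovW_two_mul_add_one, petrovW_two_mul_add_two, mul_inv, ← mul_assoc,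
    mul_inv_cancel₀ two_ne_zero, one_mul]

lemma Mw_petrovW_succ_self (n : ℕ) : Mw petrovW (n + 1) n = (Mw petrovW 1 n)⁻¹ ^ 2 :=
  Mw_succ_self_of_mul_eq_inv petrovW_mul_eq_inv n (Mw_pos petrovW_pos 1 n).ne'

/-- For the weight sequence `petrovW`: `M_{n+1}^n = (M_1^n)⁻²` for every `n ≥ 1`.
Consequently, if `(n_k)` is increasing with `M_1^{n_k} → ∞`, then `M_{n_k+1}^{n_k} → 0`
and `inf_{i ≥ 1, k} M_i^{n_k} = 0`. -/
theorem petrovW_not_ultra_hypercyclic :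
    (∀ n, 1 ≤ n → Mw petrovW (n + 1) n = ((Mw petrovW 1 n)⁻¹) ^ 2) ∧
    ∀ nk : ℕ → ℕ, StrictMono nk → (∀ k, 1 ≤ nk k) →
      Tendsto (fun k => Mw petrovW 1 (nk k)) atTop atTop →
      Tendsto (fun k => Mw petrovW (nk k + 1) (nk k)) atTop (𝓝 0) ∧
      (⨅ p : ℕ × ℕ, Mw petrovW (p.1 + 1) (nk p.2)) = 0 := by
  refine ⟨fun n _ => Mw_petrovW_succ_self n, fun nk _ _ hM => ?_⟩
  have hlim : Tendsto (fun k => Mw petrovW (nk k + 1) (nk k)) atTop (𝓝 0) := by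
    simp_rw [Mw_petrovW_succ_self]
    simpa using hM.inv_tendsto_atTop.pow 2
  exact ⟨hlim, iInf_eq_zero_of_tendsto_zero (fun _ => (Mw_pos petrovW_pos _ _).le)
    (g := fun k => (nk k, k)) hlim⟩
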